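/- arXiv:2207.04686 — 2 statements merged into one kernel-verified Lean document; each statement's English description precedes it below -/
import Mathlib

section
/- Let x_j, …, x_{T−1} ∈ ℝ^d be i.i.d. random vectors with E[x xᵀ] = H, smallest eigenvalue λ_min(H) = μ > 0, and E[‖x‖₂² x xᵀ] ⪯ R_x²·H. Let B_t = I − η·x_t x_tᵀ and let z ∈ ℝ^d be a random vector independent of all B_t. Then for any β > 0 and any stepsize η < 1/R_x², with probability at least 1 − β: ‖B_{T−1}·B_{T−2}⋯B_j·z‖² ≤ (1/β)·e^{−ημ(T−j)}·‖z‖². -/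
set_option autoImplicit false


open MeasureTheory ProbabilityTheory Real Matrix
open scoped ENNReal NNReal RealInnerProductSpace BigOperators

noncomputable section

abbrev Vec (d : ℕ) : Type := EuclideanSpace ℝ (Fin d)

/-- The smallest eigenvalue of a Hermitian matrix. -/
def lamMin {n : ℕ} {A : Matrix (Fin n) (Fin n) ℝ} (hA : A.IsHermitian) : ℝ :=
  ⨅ i, hA.eigenvalues i

/-- Action of the matrix `I − η x xᵀ` on a vector `v`. -/
def Bapp {d : ℕ} (η : ℝ) (x v : Vec d) : Vec d := v - η • (⟪x, v⟫ • x)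

/-- `chainB η x j z k = B_{j+k-1} ⋯ B_{j+1} B_j z` where `B_t = I − η x_t x_tᵀ`. -/
def chainB {d : ℕ} (η : ℝ) (x : ℕ → Vec d) (j : ℕ) (z : Vec d) : ℕ → Vec d
  | 0 => z
  | k + 1 => Bapp η (x (j + k)) (chainB η x j z k)

/-- Extension of a `Fin N`-indexed family to `ℕ` by zero. -/
def ext0 {β : Type*} [Zero β] {N : ℕ} (f : Fin N → β) : ℕ → β :=
  fun t => if h : t < N then f ⟨t, h⟩ else 0

/-! One step contracts the second moment: for fixed `v`,
`E ‖(I − η x xᵀ) v‖² = ‖v‖² − 2η vᵀHv + η² vᵀ E[‖x‖² x xᵀ] v ≤ ‖v‖² − η vᵀHv ≤ e^{−ημ} ‖v‖²`,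
because `E[‖x‖² x xᵀ] ⪯ R_x² H` and `η R_x² ≤ 1`. Since `B_{T−1}` uses a coordinate on which the
earlier factors do not depend, integrating it out first and inducting gives
`E ‖B_{T−1} ⋯ B_j z‖² ≤ e^{−ημ(T−j)} ‖z‖²` for every fixed `z`. Markov's inequality for each `z`,
integrated against the law of `z`, finishes the proof. -/

theorem lamMin_mul_dotProduct_le {n : ℕ} {A : Matrix (Fin n) (Fin n) ℝ} (hA : A.IsHermitian)
    (v : Fin n → ℝ) : lamMin hA * (v ⬝ᵥ v) ≤ v ⬝ᵥ (A *ᵥ v) := by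
  have hpsd : (A - algebraMap ℝ _ (lamMin hA)).PosSemidef := by
    refine posSemidef_iff_isHermitian_and_spectrum_nonneg.mpr ⟨hA.sub ?_, ?_⟩
    · rw [algebraMap_eq_diagonal]; exact isHermitian_diagonal _
    rw [← spectrum.sub_singleton_eq, hA.spectrum_real_eq_range_eigenvalues]
    rintro _ ⟨_, ⟨i, rfl⟩, _, rfl, rfl⟩
    exact sub_nonneg.mpr (ciInf_le (Set.finite_range hA.eigenvalues).bddBelow i)
  have := hpsd.dotProduct_mulVec_nonneg v
  simp only [Algebra.algebraMap_eq_smul_one, sub_mulVec, smul_mulVec, one_mulVec,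
    dotProduct_sub, dotProduct_smul, star_trivial, smul_eq_mul, sub_nonneg] at this
  exact this

theorem EuclideanSpace.real_norm_sq_eq_dotProduct {n : ℕ} (v : EuclideanSpace ℝ (Fin n)) :
    ‖v‖ ^ 2 = v.ofLp ⬝ᵥ v.ofLp := by
  rw [← real_inner_self_eq_norm_sq, EuclideanSpace.inner_eq_star_dotProduct, star_trivial]

theorem norm_Bapp_sq {d : ℕ} (η : ℝ) (x v : Vec d) :
    ‖Bapp η x v‖ ^ 2 = ‖v‖ ^ 2 - 2 * η * ⟪x, v⟫ ^ 2 + η ^ 2 * (‖x‖ ^ 2 * ⟪x, v⟫ ^ 2) := by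
  rw [Bapp, norm_sub_sq_real, real_inner_smul_right, real_inner_smul_right, real_inner_comm v x,
    norm_smul, norm_smul, Real.norm_eq_abs, Real.norm_eq_abs]
  ring_nf
  rw [sq_abs, sq_abs]

section SecondMoment

variable {d : ℕ} {ν : Measure (Vec d)} {H M4 : Matrix (Fin d) (Fin d) ℝ}

theorem inner_sq_eq_sum (x v : Vec d) :
    ⟪x, v⟫ ^ 2 = ∑ i, ∑ k, v i * v k * (x i * x k) := by
  simp only [EuclideanSpace.inner_eq_star_dotProduct, star_trivial, dotProduct, sq,
    Finset.sum_mul_sum]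
  exact Finset.sum_congr rfl fun i _ => Finset.sum_congr rfl fun k _ => by ring

theorem integrable_mul_apply_mul_apply {g : Vec d → ℝ} (hgm : AEStronglyMeasurable g ν)
    (hg : Integrable (fun x => g x * ‖x‖ ^ 2) ν) (i k : Fin d) :
    Integrable (fun x => g x * (x i * x k)) ν := by
  refine hg.mono (hgm.mul (by fun_prop)) (ae_of_all _ fun x => ?_)
  have hi := PiLp.norm_apply_le x i
  have hk := PiLp.norm_apply_le x k
  simp only [norm_mul, norm_pow, norm_norm]
  gcongr
  nlinarith [norm_nonneg (x.ofLp i), norm_nonneg (x.ofLp k)]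

theorem integrable_mul_inner_sq {g : Vec d → ℝ} (hgm : AEStronglyMeasurable g ν)
    (hg : Integrable (fun x => g x * ‖x‖ ^ 2) ν) (v : Vec d) :
    Integrable (fun x => g x * ⟪x, v⟫ ^ 2) ν := by
  refine (hg.mul_const (‖v‖ ^ 2)).mono (hgm.mul (by fun_prop)) (ae_of_all _ fun x => ?_)
  simp only [norm_mul, norm_pow, Real.norm_eq_abs, sq_abs, mul_assoc]
  gcongr
  rw [← mul_pow, ← sq_abs]
  exact pow_le_pow_left₀ (abs_nonneg _) (abs_real_inner_le_norm x v) 2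

theorem integral_mul_inner_sq {g : Vec d → ℝ} (hgm : AEStronglyMeasurable g ν)
    (hg : Integrable (fun x => g x * ‖x‖ ^ 2) ν) {M : Matrix (Fin d) (Fin d) ℝ}
    (hM : ∀ i k, M i k = ∫ x, g x * (x i * x k) ∂ν) (v : Vec d) :
    ∫ x, g x * ⟪x, v⟫ ^ 2 ∂ν = v.ofLp ⬝ᵥ (M *ᵥ v.ofLp) := by
  have hint (i k : Fin d) : Integrable (fun x => v i * v k * (g x * (x i * x k))) ν :=
    (integrable_mul_apply_mul_apply hgm hg i k).const_mul _
  calc ∫ x, g x * ⟪x, v⟫ ^ 2 ∂ν = ∫ x, ∑ i, ∑ k, v i * v k * (g x * (x i * x k)) ∂ν := by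
        simp only [inner_sq_eq_sum, Finset.mul_sum]
        congr with x
        exact Finset.sum_congr rfl fun i _ => Finset.sum_congr rfl fun k _ => by ring
    _ = ∑ i, ∑ k, v i * v k * M i k := by
        rw [integral_finsetSum _ fun i _ => integrable_finsetSum _ fun k _ => hint i k]
        simp only [hM, ← integral_const_mul]
        exact Finset.sum_congr rfl fun i _ => integral_finsetSum _ fun k _ => hint i k
    _ = v.ofLp ⬝ᵥ (M *ᵥ v.ofLp) := by
        simp only [dotProduct, mulVec, Finset.mul_sum]
        exact Finset.sum_congr rfl fun i _ => Finset.sum_congr rfl fun k _ => by ring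

theorem integrable_inner_sq (hmom : Integrable (fun x : Vec d => ‖x‖ ^ 2) ν) (v : Vec d) :
    Integrable (fun x => ⟪x, v⟫ ^ 2) ν := by
  simpa using integrable_mul_inner_sq (g := fun _ => 1) aestronglyMeasurable_const
    (by simpa using hmom) v

theorem integral_inner_sq (hmom : Integrable (fun x : Vec d => ‖x‖ ^ 2) ν)
    (hH : ∀ i k, H i k = ∫ x, x i * x k ∂ν) (v : Vec d) :
    ∫ x, ⟪x, v⟫ ^ 2 ∂ν = v.ofLp ⬝ᵥ (H *ᵥ v.ofLp) := by
  simpa using integral_mul_inner_sq (g := fun _ => 1) aestronglyMeasurable_const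
    (by simpa using hmom) (by simpa using hH) v

theorem integrable_norm_Bapp_sq [IsFiniteMeasure ν]
    (hmom : Integrable (fun x : Vec d => ‖x‖ ^ 2) ν)
    (hmom4 : Integrable (fun x : Vec d => ‖x‖ ^ 4) ν) (η : ℝ) (v : Vec d) :
    Integrable (fun x => ‖Bapp η x v‖ ^ 2) ν := by
  have hmom4' : Integrable (fun x : Vec d => ‖x‖ ^ 2 * ‖x‖ ^ 2) ν := by
    simpa only [← pow_add] using hmom4
  simp_rw [norm_Bapp_sq]
  exact ((integrable_const _).sub ((integrable_inner_sq hmom v).const_mul _)).add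
    ((integrable_mul_inner_sq (by fun_prop) hmom4' v).const_mul _)

theorem integral_norm_Bapp_sq [IsProbabilityMeasure ν]
    (hmom : Integrable (fun x : Vec d => ‖x‖ ^ 2) ν)
    (hmom4 : Integrable (fun x : Vec d => ‖x‖ ^ 4) ν)
    (hH : ∀ i k, H i k = ∫ x, x i * x k ∂ν)
    (hM4 : ∀ i k, M4 i k = ∫ x, ‖x‖ ^ 2 * (x i * x k) ∂ν) (η : ℝ) (v : Vec d) :
    ∫ x, ‖Bapp η x v‖ ^ 2 ∂ν =
      ‖v‖ ^ 2 - 2 * η * (v.ofLp ⬝ᵥ (H *ᵥ v.ofLp)) + η ^ 2 * (v.ofLp ⬝ᵥ (M4 *ᵥ v.ofLp)) := by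
  have hmom4' : Integrable (fun x : Vec d => ‖x‖ ^ 2 * ‖x‖ ^ 2) ν := by
    simpa only [← pow_add] using hmom4
  have hgm : AEStronglyMeasurable (fun x : Vec d => ‖x‖ ^ 2) ν := by fun_prop
  have h2 := (integrable_inner_sq hmom v).const_mul (2 * η)
  have h4 := (integrable_mul_inner_sq hgm hmom4' v).const_mul (η ^ 2)
  have h02 : Integrable (fun x : Vec d => ‖v‖ ^ 2 - 2 * η * ⟪x, v⟫ ^ 2) ν :=
    (integrable_const _).sub h2
  simp_rw [norm_Bapp_sq]
  rw [integral_add h02 h4, integral_sub (integrable_const _) h2, integral_const, probReal_univ,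
    one_smul, integral_const_mul, integral_const_mul, integral_mul_inner_sq hgm hmom4' hM4,
    integral_inner_sq hmom hH]

theorem lintegral_norm_Bapp_sq_le [IsProbabilityMeasure ν]
    (hmom : Integrable (fun x : Vec d => ‖x‖ ^ 2) ν)
    (hmom4 : Integrable (fun x : Vec d => ‖x‖ ^ 4) ν)
    (hH : ∀ i k, H i k = ∫ x, x i * x k ∂ν)
    (hM4 : ∀ i k, M4 i k = ∫ x, ‖x‖ ^ 2 * (x i * x k) ∂ν) (hHherm : H.IsHermitian)
    {Rx : ℝ} (hRx : (Rx ^ 2 • H - M4).PosSemidef) {η : ℝ} (hη0 : 0 ≤ η) (hη : η < 1 / Rx ^ 2)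
    (v : Vec d) :
    ∫⁻ x, ENNReal.ofReal (‖Bapp η x v‖ ^ 2) ∂ν ≤
      ENNReal.ofReal (Real.exp (-(η * lamMin hHherm)) * ‖v‖ ^ 2) := by
  have hQH_nonneg : 0 ≤ v.ofLp ⬝ᵥ (H *ᵥ v.ofLp) :=
    integral_inner_sq hmom hH v ▸ integral_nonneg fun x => sq_nonneg _
  set QH := v.ofLp ⬝ᵥ (H *ᵥ v.ofLp)
  set QM := v.ofLp ⬝ᵥ (M4 *ᵥ v.ofLp)
  have hQH : lamMin hHherm * ‖v‖ ^ 2 ≤ QH := by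
    rw [EuclideanSpace.real_norm_sq_eq_dotProduct]
    exact lamMin_mul_dotProduct_le hHherm _
  have hQM : QM ≤ Rx ^ 2 * QH := by
    simpa [sub_mulVec, smul_mulVec, dotProduct_sub, dotProduct_smul] using
      hRx.dotProduct_mulVec_nonneg v.ofLp
  have hηRx : η * Rx ^ 2 ≤ 1 := by
    rcases (sq_nonneg Rx).eq_or_lt with h | h
    · simp [← h]
    · exact (lt_div_iff₀ h).mp hη |>.le
  rw [← ofReal_integral_eq_lintegral_ofReal (integrable_norm_Bapp_sq hmom hmom4 η v)
      (ae_of_all _ fun _ => sq_nonneg _),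
    integral_norm_Bapp_sq hmom hmom4 hH hM4]
  gcongr
  calc ‖v‖ ^ 2 - 2 * η * QH + η ^ 2 * QM ≤ ‖v‖ ^ 2 - η * QH := by
        nlinarith [mul_le_mul_of_nonneg_left hQM (sq_nonneg η), mul_nonneg hη0 hQH_nonneg]
    _ ≤ (1 - η * lamMin hHherm) * ‖v‖ ^ 2 := by nlinarith
    _ ≤ Real.exp (-(η * lamMin hHherm)) * ‖v‖ ^ 2 := by
        gcongr
        linarith [Real.add_one_le_exp (-(η * lamMin hHherm))]

end SecondMoment

section Chain

variable {d : ℕ} (η : ℝ)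

theorem ext0_update {β : Type*} [Zero β] {N : ℕ} (f : Fin N → β) (i : Fin N) (y : β) (t : ℕ) :
    ext0 (Function.update f i y) t = if t = i then y else ext0 f t := by
  unfold ext0
  split_ifs with h₁ h₂ <;> simp_all [Fin.ext_iff]

theorem chainB_congr {x x' : ℕ → Vec d} {j k : ℕ} (h : ∀ t < k, x (j + t) = x' (j + t))
    (z : Vec d) : chainB η x j z k = chainB η x' j z k := by
  induction k with
  | zero => rfl
  | succ k ih =>
    simp only [chainB, h k k.lt_succ_self, ih fun t ht => h t (ht.trans k.lt_succ_self)]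

theorem chainB_zero (x : ℕ → Vec d) (j k : ℕ) : chainB η x j 0 k = 0 := by
  induction k with
  | zero => rfl
  | succ k ih => simp [chainB, ih, Bapp]

theorem continuous_chainB {T : ℕ} (j k : ℕ) :
    Continuous fun p : (Fin T → Vec d) × Vec d => chainB η (ext0 p.1) j p.2 k := by
  induction k with
  | zero => exact continuous_snd
  | succ k ih =>
    have hx : Continuous fun p : (Fin T → Vec d) × Vec d => ext0 p.1 (j + k) := by
      unfold ext0
      split_ifs <;> fun_prop
    simp only [chainB, Bapp]
    fun_prop

theorem measurable_ofReal_norm_chainB_sq {T : ℕ} (j k : ℕ) (z : Vec d) :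
    Measurable fun x : Fin T → Vec d => ENNReal.ofReal (‖chainB η (ext0 x) j z k‖ ^ 2) :=
  ((continuous_chainB η j k).comp (by fun_prop : Continuous fun x => (x, z))).measurable
    |>.norm.pow_const 2 |>.ennreal_ofReal

variable {T : ℕ} {ν : Measure (Vec d)} [IsProbabilityMeasure ν] {q : ℝ}

theorem lintegral_ofReal_norm_chainB_sq_le (hq : 0 ≤ q)
    (hstep : ∀ v : Vec d, ∫⁻ x, ENNReal.ofReal (‖Bapp η x v‖ ^ 2) ∂ν ≤
      ENNReal.ofReal (q * ‖v‖ ^ 2))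
    {j k : ℕ} (hk : k ≤ T - j) (z : Vec d) :
    ∫⁻ x, ENNReal.ofReal (‖chainB η (ext0 x) j z k‖ ^ 2) ∂(Measure.pi fun _ : Fin T => ν) ≤
      ENNReal.ofReal (q ^ k * ‖z‖ ^ 2) := by
  induction k with
  | zero => simp [chainB]
  | succ k ih =>
    let i : Fin T := ⟨j + k, by omega⟩
    have hmarg : ∫⋯∫⁻_{i}, (fun x => ENNReal.ofReal (‖chainB η (ext0 x) j z (k + 1)‖ ^ 2))
          ∂(fun _ => ν) ≤
        ∫⋯∫⁻_{i}, (fun x => ENNReal.ofReal q * ENNReal.ofReal (‖chainB η (ext0 x) j z k‖ ^ 2))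
          ∂(fun _ => ν) := by
      intro x
      have hindep (y : Vec d) : chainB η (ext0 (Function.update x i y)) j z k =
          chainB η (ext0 x) j z k :=
        chainB_congr η (fun t ht => by simp [ext0_update, i]; omega) z
      simp only [lmarginal_singleton, chainB, hindep, ext0_update, i,
        lintegral_const, measure_univ, mul_one]
      rw [← ENNReal.ofReal_mul hq]
      exact hstep _
    calc _ ≤ ∫⁻ x, ENNReal.ofReal q * ENNReal.ofReal (‖chainB η (ext0 x) j z k‖ ^ 2)
            ∂(Measure.pi fun _ : Fin T => ν) :=
          lintegral_le_of_lmarginal_le {i} (measurable_ofReal_norm_chainB_sq η j (k + 1) z)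
            ((measurable_ofReal_norm_chainB_sq η j k z).const_mul _) hmarg
      _ ≤ ENNReal.ofReal q * ENNReal.ofReal (q ^ k * ‖z‖ ^ 2) := by
          rw [lintegral_const_mul _ (measurable_ofReal_norm_chainB_sq η j k z)]
          gcongr
          exact ih (by omega)
      _ = ENNReal.ofReal (q ^ (k + 1) * ‖z‖ ^ 2) := by
          rw [← ENNReal.ofReal_mul hq]
          ring_nf

theorem measure_lt_norm_chainB_sq_le (hq : 0 < q)
    (hstep : ∀ v : Vec d, ∫⁻ x, ENNReal.ofReal (‖Bapp η x v‖ ^ 2) ∂ν ≤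
      ENNReal.ofReal (q * ‖v‖ ^ 2))
    {j k : ℕ} (hk : k ≤ T - j) {β : ℝ} (hβ : 0 < β) (z : Vec d) :
    (Measure.pi fun _ : Fin T => ν)
        {x | 1 / β * q ^ k * ‖z‖ ^ 2 < ‖chainB η (ext0 x) j z k‖ ^ 2} ≤ ENNReal.ofReal β := by
  rcases eq_or_ne z 0 with rfl | hz
  · simp [chainB_zero]
  have hε : 0 < 1 / β * q ^ k * ‖z‖ ^ 2 := by positivity
  calc _ ≤ (Measure.pi fun _ : Fin T => ν)
          {x | ENNReal.ofReal (1 / β * q ^ k * ‖z‖ ^ 2) ≤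
            ENNReal.ofReal (‖chainB η (ext0 x) j z k‖ ^ 2)} :=
        measure_mono fun x hx => ENNReal.ofReal_le_ofReal (le_of_lt hx)
    _ ≤ (∫⁻ x, ENNReal.ofReal (‖chainB η (ext0 x) j z k‖ ^ 2) ∂(Measure.pi fun _ : Fin T => ν)) /
          ENNReal.ofReal (1 / β * q ^ k * ‖z‖ ^ 2) :=
        meas_ge_le_lintegral_div (measurable_ofReal_norm_chainB_sq η j k z).aemeasurable
          (by simpa using hε) ENNReal.ofReal_ne_top
    _ ≤ ENNReal.ofReal (q ^ k * ‖z‖ ^ 2) / ENNReal.ofReal (1 / β * q ^ k * ‖z‖ ^ 2) := by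
        gcongr
        exact lintegral_ofReal_norm_chainB_sq_le η hq.le hstep hk z
    _ = ENNReal.ofReal β := by
        rw [← ENNReal.ofReal_div_of_pos hε]
        congr 1
        field_simp

end Chain

theorem one_sub_le_prod_of_forall_measure_slice_le {α γ : Type*} [MeasurableSpace α]
    [MeasurableSpace γ] {μ : Measure α} [IsProbabilityMeasure μ] {ν : Measure γ}
    [IsProbabilityMeasure ν] {s : Set (α × γ)} (hs : MeasurableSet s) {ε : ℝ≥0∞}
    (h : ∀ c, μ {a | (a, c) ∉ s} ≤ ε) : 1 - ε ≤ μ.prod ν s := by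
  have hcompl : μ.prod ν sᶜ ≤ ε := by
    rw [Measure.prod_apply_symm hs.compl]
    calc _ ≤ ∫⁻ _, ε ∂ν := lintegral_mono fun c => h c
      _ = ε := by simp
  rw [tsub_le_iff_right]
  calc 1 = μ.prod ν (s ∪ sᶜ) := by simp
    _ ≤ μ.prod ν s + μ.prod ν sᶜ := measure_union_le _ _
    _ ≤ μ.prod ν s + ε := by gcongr

theorem chain_contraction_high_prob_general
    (d T j : ℕ)
    (ν : Measure (Vec d)) [IsProbabilityMeasure ν]
    (νz : Measure (Vec d)) [IsProbabilityMeasure νz]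
    (hmom : Integrable (fun x : Vec d => ‖x‖ ^ 2) ν)
    (hmom4 : Integrable (fun x : Vec d => ‖x‖ ^ 4) ν)
    (H M4 : Matrix (Fin d) (Fin d) ℝ)
    (hH : ∀ i k, H i k = ∫ x, x i * x k ∂ν)
    (hM4 : ∀ i k, M4 i k = ∫ x, ‖x‖ ^ 2 * (x i * x k) ∂ν)
    (hHherm : H.IsHermitian) (μ : ℝ) (hμdef : μ = lamMin hHherm)
    (Rx : ℝ) (hRx : (Rx ^ 2 • H - M4).PosSemidef)
    (η : ℝ) (hη0 : 0 < η) (hη : η < 1 / Rx ^ 2)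
    (β : ℝ) (hβ : 0 < β) :
    1 - ENNReal.ofReal β ≤
      ((Measure.pi fun _ : Fin T => ν).prod νz)
        {ω : (Fin T → Vec d) × Vec d |
          ‖chainB η (ext0 ω.1) j ω.2 (T - j)‖ ^ 2 ≤
            (1 / β) * Real.exp (-(η * μ) * ((T - j : ℕ) : ℝ)) * ‖ω.2‖ ^ 2} := by
  subst hμdef
  have hstep := lintegral_norm_Bapp_sq_le hmom hmom4 hH hM4 hHherm hRx hη0.le hη
  have hpow : Real.exp (-(η * lamMin hHherm) * ((T - j : ℕ) : ℝ)) =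
      Real.exp (-(η * lamMin hHherm)) ^ (T - j) := by
    rw [← Real.exp_nat_mul, mul_comm]
  refine one_sub_le_prod_of_forall_measure_slice_le ?_ fun z => ?_
  · exact measurableSet_le ((continuous_chainB η j (T - j)).measurable.norm.pow_const 2)
      (by fun_prop)
  · simpa only [Set.mem_ofPred_eq, not_le, hpow] using
      measure_lt_norm_chainB_sq_le η (Real.exp_pos _) hstep le_rfl hβ z

/-- Lemma A.3 of the paper. Let `x_j, …, x_{T−1}` be i.i.d. with
`E[x xᵀ] = H`, smallest eigenvalue `μ > 0` and `E[‖x‖² x xᵀ] ⪯ R_x² H`, let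
`B_t = I − η x_t x_tᵀ`, and let `z` be independent of all `B_t`. For `0 < η < 1/R_x²`
and `β > 0`, with probability at least `1 − β`,
`‖B_{T−1} ⋯ B_j z‖² ≤ (1/β) e^{−ημ(T−j)} ‖z‖²`. -/
theorem chain_contraction_high_prob
    (d T j : ℕ) (hd : 0 < d) (hjT : j ≤ T)
    (ν : Measure (Vec d)) [IsProbabilityMeasure ν]
    (νz : Measure (Vec d)) [IsProbabilityMeasure νz]
    (hmom : Integrable (fun x : Vec d => ‖x‖ ^ 2) ν)
    (hmom4 : Integrable (fun x : Vec d => ‖x‖ ^ 4) ν)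
    (H M4 : Matrix (Fin d) (Fin d) ℝ)
    (hH : ∀ i k, H i k = ∫ x, x i * x k ∂ν)
    (hM4 : ∀ i k, M4 i k = ∫ x, ‖x‖ ^ 2 * (x i * x k) ∂ν)
    (hHherm : H.IsHermitian) (μ : ℝ) (hμdef : μ = lamMin hHherm) (hμ : 0 < μ)
    (Rx : ℝ) (hRx : (Rx ^ 2 • H - M4).PosSemidef)
    (η : ℝ) (hη0 : 0 < η) (hη : η < 1 / Rx ^ 2)
    (β : ℝ) (hβ : 0 < β) :
    1 - ENNReal.ofReal β ≤
      ((Measure.pi fun _ : Fin T => ν).prod νz)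
        {ω : (Fin T → Vec d) × Vec d |
          ‖chainB η (ext0 ω.1) j ω.2 (T - j)‖ ^ 2 ≤
            (1 / β) * Real.exp (-(η * μ) * ((T - j : ℕ) : ℝ)) * ‖ω.2‖ ^ 2} :=
  chain_contraction_high_prob_general d T j ν νz hmom hmom4 H M4 hH hM4 hHherm μ hμdef Rx hRx η hη0
    hη β hβ
end
end

section
/- Let x_0, …, x_{b−1} ∈ ℝ^d be i.i.d. random vectors with E[x xᵀ] = H and E[‖x‖₂² x xᵀ] ⪯ R_x²·H, and let B = I − (η/b)·Σ_{i=0}^{b−1} x_i x_iᵀ. If η ≤ b/(R_x² + (b−1)·‖H‖₂), then E[Bᵀ B] ⪯ I − η·H. -/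
/-! Write `S = ∑ xᵢ xᵢᵀ`, so that `BᵀB = I - (2η/b) S + (η/b)² S²`. Distinct samples are
independent, so `E[S²] = b M₄ + b(b-1) H²` with `M₄ = E[‖x‖² x xᵀ]`, and
`E[BᵀB] = I - 2ηH + (η²/b)(M₄ + (b-1)H²)`. Then
`I - ηH - E[BᵀB] = (η²/b)(R_x² H - M₄) + (η²(b-1)/b)(‖H‖ H - H²) + (η/b)(b - η(R_x² + (b-1)‖H‖)) H`
is a nonnegative combination of positive semidefinite matrices: `‖H‖ H - H² ⪰ 0` because the
spectrum of `H` lies in `[0, ‖H‖]`, and the step-size condition makes the last coefficient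
nonnegative. -/

set_option autoImplicit false

open MeasureTheory ProbabilityTheory Real Matrix
open scoped ENNReal NNReal RealInnerProductSpace BigOperators

noncomputable section

/-- Spectral (ℓ₂ operator) norm of a matrix. -/
def specNorm {n : ℕ} (A : Matrix (Fin n) (Fin n) ℝ) : ℝ :=
  ‖Matrix.toEuclideanCLM (𝕜 := ℝ) A‖

/-- The mini-batch matrix `B = I − (η/b) ∑_{i<b} x_i x_iᵀ`. -/
def Bmat {d : ℕ} (η : ℝ) (b : ℕ) (x : Fin b → Vec d) : Matrix (Fin d) (Fin d) ℝ :=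
  1 - (η / (b : ℝ)) • ∑ i : Fin b, Matrix.vecMulVec (fun k => x i k) (fun k => x i k)

section Pi

variable {ι Ω : Type*} [Fintype ι] [MeasurableSpace Ω] {μ : Measure Ω} [IsProbabilityMeasure μ]

theorem integrable_pi_comp_eval {f : Ω → ℝ} (hf : Integrable f μ) (i : ι) :
    Integrable (fun x => f (x i)) (Measure.pi fun _ => μ) :=
  ((measurePreserving_eval _ i).integrable_comp hf.aestronglyMeasurable).mpr hf

theorem integral_pi_comp_eval {f : Ω → ℝ} (hf : AEStronglyMeasurable f μ) (i : ι) :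
    ∫ x, f (x i) ∂Measure.pi (fun _ => μ) = ∫ y, f y ∂μ := by
  have h := measurePreserving_eval (fun _ => μ) i
  rw [← h.map_eq] at hf
  exact (integral_map h.measurable.aemeasurable hf).symm.trans (by rw [h.map_eq])

theorem indepFun_pi_comp_eval {f g : Ω → ℝ} (hf : AEMeasurable f μ) (hg : AEMeasurable g μ)
    {i j : ι} (hij : i ≠ j) :
    IndepFun (fun x => f (x i)) (fun x => g (x j)) (Measure.pi fun _ => μ) :=
  ((iIndepFun_pi fun _ => hf.prodMk hg).indepFun hij).comp measurable_fst measurable_snd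

end Pi

/-- `Matrix` carries no global norm, so the mean of a random matrix is taken entry by entry. -/
def HasMatrixMean {Ω m n : Type*} [MeasurableSpace Ω] (μ : Measure Ω) (F : Ω → Matrix m n ℝ)
    (A : Matrix m n ℝ) : Prop :=
  ∀ i j, Integrable (fun ω => F ω i j) μ ∧ ∫ ω, F ω i j ∂μ = A i j

namespace HasMatrixMean

variable {Ω ι l m n : Type*} [MeasurableSpace Ω] {μ : Measure Ω}
  {F G : Ω → Matrix m n ℝ} {A B : Matrix m n ℝ}

theorem add (hF : HasMatrixMean μ F A) (hG : HasMatrixMean μ G B) :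
    HasMatrixMean μ (fun ω => F ω + G ω) (A + B) := fun i j =>
  ⟨(hF i j).1.add (hG i j).1, by
    simp only [Matrix.add_apply, integral_add (hF i j).1 (hG i j).1, (hF i j).2, (hG i j).2]⟩

theorem sub (hF : HasMatrixMean μ F A) (hG : HasMatrixMean μ G B) :
    HasMatrixMean μ (fun ω => F ω - G ω) (A - B) := fun i j =>
  ⟨(hF i j).1.sub (hG i j).1, by
    simp only [Matrix.sub_apply, integral_sub (hF i j).1 (hG i j).1, (hF i j).2, (hG i j).2]⟩

theorem const_smul (hF : HasMatrixMean μ F A) (c : ℝ) :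
    HasMatrixMean μ (fun ω => c • F ω) (c • A) := fun i j =>
  ⟨(hF i j).1.const_mul c, by
    simp only [Matrix.smul_apply, smul_eq_mul, integral_const_mul, (hF i j).2]⟩

theorem const [IsProbabilityMeasure μ] (A : Matrix m n ℝ) : HasMatrixMean μ (fun _ => A) A :=
  fun i j => ⟨integrable_const _, by simp⟩

theorem sum {s : Finset ι} {F : ι → Ω → Matrix m n ℝ} {A : ι → Matrix m n ℝ}
    (h : ∀ k ∈ s, HasMatrixMean μ (F k) (A k)) :
    HasMatrixMean μ (fun ω => ∑ k ∈ s, F k ω) (∑ k ∈ s, A k) := fun i j => by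
  simp only [Matrix.sum_apply]
  exact ⟨integrable_finsetSum _ fun k hk => (h k hk i j).1,
    (integral_finsetSum _ fun k hk => (h k hk i j).1).trans
      (Finset.sum_congr rfl fun k hk => (h k hk i j).2)⟩

theorem comp_eval [Fintype ι] [IsProbabilityMeasure μ] (hF : HasMatrixMean μ F A) (k : ι) :
    HasMatrixMean (Measure.pi fun _ : ι => μ) (fun x => F (x k)) A := fun i j =>
  ⟨integrable_pi_comp_eval (hF i j).1 k,
    (integral_pi_comp_eval (hF i j).1.aestronglyMeasurable k).trans (hF i j).2⟩

theorem mul_comp_eval_of_ne [Fintype ι] [Fintype l] [IsProbabilityMeasure μ]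
    {F : Ω → Matrix m l ℝ} {G : Ω → Matrix l n ℝ} {A : Matrix m l ℝ} {B : Matrix l n ℝ}
    (hF : HasMatrixMean μ F A) (hG : HasMatrixMean μ G B) {k k' : ι} (hkk' : k ≠ k') :
    HasMatrixMean (Measure.pi fun _ : ι => μ) (fun x => F (x k) * G (x k')) (A * B) := by
  intro i j
  have hind : ∀ p, IndepFun (fun x => F (x k) i p) (fun x => G (x k') p j)
      (Measure.pi fun _ : ι => μ) := fun p =>
    indepFun_pi_comp_eval (hF i p).1.aemeasurable (hG p j).1.aemeasurable hkk'
  have hint : ∀ p, Integrable (fun x => F (x k) i p * G (x k') p j)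
      (Measure.pi fun _ : ι => μ) := fun p =>
    (hind p).integrable_mul (integrable_pi_comp_eval (hF i p).1 k)
      (integrable_pi_comp_eval (hG p j).1 k')
  simp only [mul_apply]
  refine ⟨integrable_finsetSum _ fun p _ => hint p, ?_⟩
  rw [integral_finsetSum _ fun p _ => hint p]
  refine Finset.sum_congr rfl fun p _ => ?_
  rw [(hind p).integral_fun_mul_eq_mul_integral
      (integrable_pi_comp_eval (hF i p).1 k).aestronglyMeasurable
      (integrable_pi_comp_eval (hG p j).1 k').aestronglyMeasurable,
    integral_pi_comp_eval (hF i p).1.aestronglyMeasurable,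
    integral_pi_comp_eval (hG p j).1.aestronglyMeasurable, (hF i p).2, (hG p j).2]

theorem integral_dotProduct_mulVec [Fintype m] [Fintype n] (hF : HasMatrixMean μ F A) (v : m → ℝ)
    (w : n → ℝ) : ∫ ω, v ⬝ᵥ (F ω *ᵥ w) ∂μ = v ⬝ᵥ (A *ᵥ w) := by
  have hint : ∀ i j, Integrable (fun ω => v i * (F ω i j * w j)) μ := fun i j =>
    ((hF i j).1.mul_const _).const_mul _
  simp only [dotProduct, mulVec, Finset.mul_sum]
  rw [integral_finsetSum _ fun i _ => integrable_finsetSum _ fun j _ => hint i j]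
  refine Finset.sum_congr rfl fun i _ => ?_
  rw [integral_finsetSum _ fun j _ => hint i j]
  refine Finset.sum_congr rfl fun j _ => ?_
  rw [integral_const_mul, integral_mul_const, (hF i j).2]

theorem posSemidef [Fintype n] {F : Ω → Matrix n n ℝ} {A : Matrix n n ℝ}
    (hF : HasMatrixMean μ F A) (hpsd : ∀ ω, (F ω).PosSemidef) : A.PosSemidef := by
  refine .of_dotProduct_mulVec_nonneg ?_ fun v => ?_
  · ext i j
    rw [conjTranspose_apply, star_trivial, ← (hF i j).2, ← (hF j i).2]
    exact integral_congr_ae <| ae_of_all _ fun ω => (hpsd ω).isHermitian.apply i j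
  · rw [← hF.integral_dotProduct_mulVec]
    exact integral_nonneg fun ω => (hpsd ω).dotProduct_mulVec_nonneg v

theorem sum_comp_eval_mul_sum_comp_eval [Fintype ι] [DecidableEq ι] [Fintype n]
    [IsProbabilityMeasure μ] {F : Ω → Matrix n n ℝ} {A M : Matrix n n ℝ}
    (hF : HasMatrixMean μ F A) (hFF : HasMatrixMean μ (fun ω => F ω * F ω) M) :
    HasMatrixMean (Measure.pi fun _ : ι => μ) (fun x => (∑ k, F (x k)) * ∑ k, F (x k))
      ((Fintype.card ι : ℝ) • M + ((Fintype.card ι : ℝ) * (Fintype.card ι - 1)) • (A * A)) := by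
  -- the diagonal correction is isolated so that `Finset.sum_ite_eq` removes it
  have hpair : ∀ k k' : ι, HasMatrixMean (Measure.pi fun _ : ι => μ)
      (fun x => F (x k) * F (x k')) (A * A + if k = k' then M - A * A else 0) := by
    intro k k'
    split_ifs with h
    · subst h
      simpa using hFF.comp_eval k
    · simpa using hF.mul_comp_eval_of_ne hF h
  have hsum := HasMatrixMean.sum fun k (_ : k ∈ Finset.univ) =>
    HasMatrixMean.sum fun k' (_ : k' ∈ Finset.univ) => hpair k k'
  simp only [Finset.sum_add_distrib, Finset.sum_ite_eq, Finset.mem_univ, if_true,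
    Finset.sum_const, Finset.card_univ, ← Finset.sum_mul_sum] at hsum
  convert hsum using 1
  rw [← Nat.cast_smul_eq_nsmul ℝ, ← Nat.cast_smul_eq_nsmul ℝ]
  module

end HasMatrixMean

section Euclidean

variable {n : Type*} [Fintype n] {ν : Measure (EuclideanSpace ℝ n)}

theorem integrable_apply_mul_apply (h : Integrable (fun y : EuclideanSpace ℝ n => ‖y‖ ^ 2) ν)
    (i j : n) : Integrable (fun y : EuclideanSpace ℝ n => y i * y j) ν := by
  refine h.mono' (by fun_prop : Continuous _).aestronglyMeasurable (ae_of_all _ fun y => ?_)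
  rw [norm_mul, sq]
  exact mul_le_mul (PiLp.norm_apply_le y i) (PiLp.norm_apply_le y j) (norm_nonneg _)
    (norm_nonneg _)

theorem integrable_norm_sq_mul_apply_mul_apply
    (h : Integrable (fun y : EuclideanSpace ℝ n => ‖y‖ ^ 4) ν) (i j : n) :
    Integrable (fun y : EuclideanSpace ℝ n => ‖y‖ ^ 2 * (y i * y j)) ν := by
  refine h.mono' (by fun_prop : Continuous _).aestronglyMeasurable (ae_of_all _ fun y => ?_)
  rw [norm_mul, norm_mul, norm_pow, norm_norm]
  calc ‖y‖ ^ 2 * (‖y i‖ * ‖y j‖) ≤ ‖y‖ ^ 2 * (‖y‖ * ‖y‖) := by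
        gcongr <;> exact PiLp.norm_apply_le y _
    _ = ‖y‖ ^ 4 := by ring

theorem hasMatrixMean_vecMulVec (h : Integrable (fun y : EuclideanSpace ℝ n => ‖y‖ ^ 2) ν)
    {H : Matrix n n ℝ} (hH : ∀ i j, H i j = ∫ y, y i * y j ∂ν) :
    HasMatrixMean ν (fun y => vecMulVec y y) H := fun i j =>
  ⟨integrable_apply_mul_apply h i j, (hH i j).symm⟩

theorem hasMatrixMean_vecMulVec_mul_self
    (h : Integrable (fun y : EuclideanSpace ℝ n => ‖y‖ ^ 4) ν)
    {M : Matrix n n ℝ} (hM : ∀ i j, M i j = ∫ y, ‖y‖ ^ 2 * (y i * y j) ∂ν) :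
    HasMatrixMean ν (fun y => vecMulVec y y * vecMulVec y y) M := by
  have hsq : ∀ y : EuclideanSpace ℝ n, vecMulVec y y * vecMulVec y y = ‖y‖ ^ 2 • vecMulVec y y :=
    fun y => by
      rw [vecMulVec_mul_vecMulVec, vecMulVec_smul, EuclideanSpace.real_norm_sq_eq]
      simp [dotProduct, sq]
  simp_rw [hsq]
  exact fun i j => ⟨integrable_norm_sq_mul_apply_mul_apply h i j, (hM i j).symm⟩

end Euclidean

theorem transpose_Bmat_mul_Bmat {d : ℕ} (η : ℝ) (b : ℕ) (x : Fin b → Vec d) :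
    (Bmat η b x)ᵀ * Bmat η b x = 1 - (2 * (η / b)) • (∑ k, vecMulVec (x k) (x k))
      + (η / b) ^ 2 • ((∑ k, vecMulVec (x k) (x k)) * ∑ k, vecMulVec (x k) (x k)) := by
  have hsymm : (Bmat η b x)ᵀ = Bmat η b x := by
    simp [Bmat, transpose_sum, transpose_vecMulVec]
  rw [hsymm, Bmat]
  simp only [sub_mul, mul_sub, one_mul, mul_one, smul_mul_smul_comm, mul_smul]
  module

theorem hasMatrixMean_transpose_Bmat_mul_Bmat {d b : ℕ} {ν : Measure (Vec d)}
    [IsProbabilityMeasure ν] {H M : Matrix (Fin d) (Fin d) ℝ}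
    (hH : HasMatrixMean ν (fun y => vecMulVec y y) H)
    (hM : HasMatrixMean ν (fun y => vecMulVec y y * vecMulVec y y) M) (hb : b ≠ 0) (η : ℝ) :
    HasMatrixMean (Measure.pi fun _ : Fin b => ν) (fun x => (Bmat η b x)ᵀ * Bmat η b x)
      (1 - (2 * η) • H + (η ^ 2 / b) • (M + ((b : ℝ) - 1) • (H * H))) := by
  simp_rw [transpose_Bmat_mul_Bmat]
  have hS := HasMatrixMean.sum fun k (_ : k ∈ Finset.univ) => hH.comp_eval (ι := Fin b) k
  simp only [Finset.sum_const, Finset.card_univ, Fintype.card_fin] at hS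
  have := ((HasMatrixMean.const 1).sub (hS.const_smul (2 * (η / b)))).add
    ((hH.sum_comp_eval_mul_sum_comp_eval (ι := Fin b) hM).const_smul ((η / b) ^ 2))
  simp only [Fintype.card_fin] at this
  convert this using 1
  rw [← Nat.cast_smul_eq_nsmul ℝ]
  match_scalars <;> field_simp

open scoped MatrixOrder Matrix.Norms.L2Operator in
theorem Matrix.PosSemidef.norm_smul_sub_mul_self {n : Type*} [Fintype n] [DecidableEq n]
    {A : Matrix n n ℝ} (hA : A.PosSemidef) : (‖A‖ • A - A * A).PosSemidef := by
  rw [← nonneg_iff_posSemidef]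
  have hsa : IsSelfAdjoint A := hA.isHermitian
  rw [show ‖A‖ • A - A * A = cfc (fun t : ℝ => ‖A‖ * t - t ^ 2) A by
    rw [cfc_sub _ _ A, cfc_const_mul_id _ A, cfc_pow_id A, sq]]
  refine cfc_nonneg fun t ht => ?_
  have ht0 : 0 ≤ t := spectrum_nonneg_of_nonneg hA.nonneg ht
  have hone : ‖(1 : Matrix n n ℝ)‖ ≤ 1 := by
    rw [cstar_norm_def, map_one]
    exact ContinuousLinearMap.norm_id_le
  have htA : t ≤ ‖A‖ := by
    simpa [abs_of_nonneg ht0] using (spectrum.norm_le_norm_mul_of_mem ht).trans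
      (mul_le_of_le_one_right (norm_nonneg A) hone)
  nlinarith

theorem posSemidef_smul_sub_minibatch_moment {d : ℕ} {H M : Matrix (Fin d) (Fin d) ℝ}
    {R η b : ℝ} (hH : H.PosSemidef) (hM : (R • H - M).PosSemidef) (hη : 0 ≤ η) (hb : 1 ≤ b)
    (hηb : η * (R + (b - 1) * specNorm H) ≤ b) :
    (η • H - (η ^ 2 / b) • (M + (b - 1) • (H * H))).PosSemidef := by
  have hb0 : 0 < b := zero_lt_one.trans_le hb
  have hdecomp : η • H - (η ^ 2 / b) • (M + (b - 1) • (H * H))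
      = (η ^ 2 / b) • (R • H - M) + (η ^ 2 / b * (b - 1)) • (specNorm H • H - H * H)
        + (η / b * (b - η * (R + (b - 1) * specNorm H))) • H := by
    match_scalars <;> field_simp
    ring
  rw [hdecomp]
  exact ((hM.smul (by positivity)).add (hH.norm_smul_sub_mul_self.smul
    (mul_nonneg (by positivity) (sub_nonneg.mpr hb)))).add
    (hH.smul (mul_nonneg (by positivity) (sub_nonneg.mpr hηb)))

theorem minibatch_contraction_general
    (d b : ℕ) (hb : 0 < b)
    (ν : Measure (Vec d)) [IsProbabilityMeasure ν]
    (hmom : Integrable (fun x : Vec d => ‖x‖ ^ 2) ν)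
    (hmom4 : Integrable (fun x : Vec d => ‖x‖ ^ 4) ν)
    (H M4 EB : Matrix (Fin d) (Fin d) ℝ)
    (hH : ∀ i k, H i k = ∫ x, x i * x k ∂ν)
    (hM4 : ∀ i k, M4 i k = ∫ x, ‖x‖ ^ 2 * (x i * x k) ∂ν)
    (Rx : ℝ) (hRx : (Rx ^ 2 • H - M4).PosSemidef)
    (η : ℝ) (hη0 : 0 < η)
    (hEB : ∀ i k, EB i k =
      ∫ x, ((Bmat η b x)ᵀ * Bmat η b x) i k ∂(Measure.pi fun _ : Fin b => ν))
    (hη : η ≤ (b : ℝ) / (Rx ^ 2 + ((b : ℝ) - 1) * specNorm H)) :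
    ((1 : Matrix (Fin d) (Fin d) ℝ) - η • H - EB).PosSemidef := by
  have hb1 : (1 : ℝ) ≤ b := Nat.one_le_cast.mpr hb
  have hF := hasMatrixMean_vecMulVec hmom hH
  have hEB_eq : EB = 1 - (2 * η) • H + (η ^ 2 / b) • (M4 + ((b : ℝ) - 1) • (H * H)) :=
    ext fun i k => (hEB i k).trans (hasMatrixMean_transpose_Bmat_mul_Bmat hF
      (hasMatrixMean_vecMulVec_mul_self hmom4 hM4) hb.ne' η i k).2
  have hC : 0 ≤ Rx ^ 2 + ((b : ℝ) - 1) * specNorm H :=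
    add_nonneg (sq_nonneg Rx) (mul_nonneg (sub_nonneg.mpr hb1) (norm_nonneg _))
  have hηb : η * (Rx ^ 2 + ((b : ℝ) - 1) * specNorm H) ≤ b := by
    rcases hC.eq_or_lt with hC0 | hCpos
    · rw [← hC0, mul_zero]
      positivity
    · exact (le_div_iff₀ hCpos).mp hη
  rw [hEB_eq]
  convert posSemidef_smul_sub_minibatch_moment
    (hF.posSemidef fun y => posSemidef_vecMulVec_self_star y) hRx hη0.le hb1 hηb using 1
  module

/-- Lemma B.3 of the paper: for i.i.d. `x_0, …, x_{b−1}` with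
`E[x xᵀ] = H` and `E[‖x‖² x xᵀ] ⪯ R_x² H`, and `B = I − (η/b) ∑ x_i x_iᵀ`, if
`η ≤ b/(R_x² + (b−1)‖H‖₂)` then `E[Bᵀ B] ⪯ I − η H`. -/
theorem minibatch_contraction
    (d b : ℕ) (hd : 0 < d) (hb : 0 < b)
    (ν : Measure (Vec d)) [IsProbabilityMeasure ν]
    (hmom : Integrable (fun x : Vec d => ‖x‖ ^ 2) ν)
    (hmom4 : Integrable (fun x : Vec d => ‖x‖ ^ 4) ν)
    (H M4 EB : Matrix (Fin d) (Fin d) ℝ)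
    (hH : ∀ i k, H i k = ∫ x, x i * x k ∂ν)
    (hM4 : ∀ i k, M4 i k = ∫ x, ‖x‖ ^ 2 * (x i * x k) ∂ν)
    (Rx : ℝ) (hRx : (Rx ^ 2 • H - M4).PosSemidef)
    (η : ℝ) (hη0 : 0 < η)
    (hEB : ∀ i k, EB i k =
      ∫ x, ((Bmat η b x)ᵀ * Bmat η b x) i k ∂(Measure.pi fun _ : Fin b => ν))
    (hη : η ≤ (b : ℝ) / (Rx ^ 2 + ((b : ℝ) - 1) * specNorm H)) :
    ((1 : Matrix (Fin d) (Fin d) ℝ) - η • H - EB).PosSemidef :=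
  minibatch_contraction_general d b hb ν hmom hmom4 H M4 EB hH hM4 Rx hRx η hη0 hEB hη
end
end
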